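/- For every integer k with 0 ≤ k ≤ n−6: there exists a nonzero real number c such that ε_1 · (ε_{n−4−k} · (ε_{n−4−k} · (ε*_{n−3−k} ∧ η* ⊗ ε_{2n−6}))) = c · ∂(X* ⊗ ε_{n−4−k}), where the dots denote the g⁰-action on C²(m,g); in particular, every g⁰-invariant subspace of C²(m,g) containing ε*_{n−3−k} ∧ η* ⊗ ε_{2n−6} contains a nonzero element of ∂(C¹₊(m,g)). -/

import Mathlib

noncomputable section

open scoped BigOperators

/-- The underlying vector space of `gl₂(ℝ)`, with basis `Y, H, E, X` at indices `0,1,2,3`. -/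
abbrev G2 : Type := Fin 4 → ℝ

/-- The underlying vector space of the Heisenberg algebra `heis_{2n-5}`:
coefficients of `ε_1, …, ε_{2n-6}` together with the coefficient of `η`. -/
abbrev Hs (n : ℕ) : Type := (Fin (2*n-6) → ℝ) × ℝ

/-- The underlying vector space of `g = gl₂(ℝ) ⋉ heis_{2n-5}`. -/
abbrev Gg (n : ℕ) : Type := G2 × Hs n

/-- The basis vector `ε_p` (1-based index `p`). -/
def epsV (n : ℕ) (p : ℕ) : Hs n := (fun i => if i.val + 1 = p then 1 else 0, 0)

/-- The central basis vector `η`. -/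
def etaV (n : ℕ) : Hs n := (0, 1)

/-- The Heisenberg bracket, encoding `[ε_i, ε_{2n-5-i}] = (-1)^i η`. -/
def heisBr (n : ℕ) (x y : Hs n) : Hs n :=
  (0, ∑ i : Fin (2*n-6), (-1 : ℝ)^(i.val+1) * x.1 i * y.1 i.rev)

/-- The `gl₂(ℝ)` bracket: `[X,Y]=H`, `[H,X]=2X`, `[H,Y]=-2Y`, and `E` is central. -/
def gl2Br (a b : G2) : G2 :=
  ![-2*(a 1 * b 0 - a 0 * b 1), a 3 * b 0 - a 0 * b 3, 0, 2*(a 1 * b 3 - a 3 * b 1)]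

/-- The map `φ : gl₂(ℝ) → End(heis_{2n-5})` from the paper. -/
def phi (n : ℕ) (a : G2) (v : Hs n) : Hs n :=
  (fun i =>
      a 1 * (2*(i.val:ℝ) + 7 - 2*(n:ℝ)) * v.1 i
    + a 2 * v.1 i
    + a 3 * (if h : 0 < i.val then v.1 ⟨i.val - 1, by have := i.isLt; omega⟩ else 0)
    + a 0 * (((i.val:ℝ)+1) * (2*(n:ℝ) - 7 - (i.val:ℝ))) *
        (if h : i.val + 1 < 2*n-6 then v.1 ⟨i.val+1, h⟩ else 0),
   2 * a 2 * v.2)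

/-- The bracket of the semidirect product `g = gl₂(ℝ) ⋉_φ heis_{2n-5}`. -/
def gBr (n : ℕ) (x y : Gg n) : Gg n :=
  (gl2Br x.1 y.1, phi n x.1 y.2 - phi n y.1 x.2 + heisBr n x.2 y.2)

def bY (n : ℕ) : Gg n := (![1,0,0,0], 0)
def bH (n : ℕ) : Gg n := (![0,1,0,0], 0)
def bE (n : ℕ) : Gg n := (![0,0,1,0], 0)
def bX (n : ℕ) : Gg n := (![0,0,0,1], 0)
def bEps (n : ℕ) (p : ℕ) : Gg n := (0, epsV n p)
def bEta (n : ℕ) : Gg n := (0, etaV n)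

/-- The weight-`w` graded component of `g` in the grading of `s^{k,n}`: the span of the
basis elements of weight `w`, where `wght Y = 1`, `wght H = wght E = 0`, `wght X = -1`,
`wght ε_p = n-4-k-p`, `wght η = -3-2k`. -/
def gComp (n k : ℕ) (w : ℤ) : Submodule ℝ (Gg n) :=
  Submodule.span ℝ {v : Gg n |
    (v = bY n ∧ w = 1) ∨ ((v = bH n ∨ v = bE n) ∧ w = 0) ∨ (v = bX n ∧ w = -1) ∨
    (∃ p : ℕ, 1 ≤ p ∧ p ≤ 2*n-6 ∧ v = bEps n p ∧ w = (n:ℤ) - 4 - (k:ℤ) - (p:ℤ)) ∨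
    (v = bEta n ∧ w = -3 - 2*(k:ℤ))}

/-- The negative part `m = s^{k,n}` of `g` (for `0 ≤ k ≤ n-4`): the span of the basis
elements of negative weight, i.e. of `X`, `ε_p` for `n-3-k ≤ p ≤ 2n-6`, and `η`. -/
def mSub (n k : ℕ) : Submodule ℝ (Gg n) where
  carrier := {x | x.1 0 = 0 ∧ x.1 1 = 0 ∧ x.1 2 = 0 ∧
    ∀ i : Fin (2*n-6), ((i.val:ℤ) + 1 < (n:ℤ) - 3 - (k:ℤ) → x.2.1 i = 0)}
  add_mem' := by
    rintro a b ⟨ha0, ha1, ha2, ha3⟩ ⟨hb0, hb1, hb2, hb3⟩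
    exact ⟨by simp [ha0, hb0], by simp [ha1, hb1], by simp [ha2, hb2],
      fun i hi => by simp [ha3 i hi, hb3 i hi]⟩
  zero_mem' := ⟨rfl, rfl, rfl, fun i _ => rfl⟩
  smul_mem' := by
    rintro c a ⟨ha0, ha1, ha2, ha3⟩
    exact ⟨by simp [ha0], by simp [ha1], by simp [ha2], fun i hi => by simp [ha3 i hi]⟩

/-- The non-negative part `g⁰` of `g` in the grading of `s^{k,n}`. -/
def g0Sub (n k : ℕ) : Submodule ℝ (Gg n) where
  carrier := {x | x.1 3 = 0 ∧ x.2.2 = 0 ∧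
    ∀ i : Fin (2*n-6), ((n:ℤ) - 3 - (k:ℤ) ≤ (i.val:ℤ) + 1 → x.2.1 i = 0)}
  add_mem' := by
    rintro a b ⟨ha0, ha1, ha3⟩ ⟨hb0, hb1, hb3⟩
    exact ⟨by simp [ha0, hb0], by simp [ha1, hb1], fun i hi => by simp [ha3 i hi, hb3 i hi]⟩
  zero_mem' := ⟨rfl, rfl, fun i _ => rfl⟩
  smul_mem' := by
    rintro c a ⟨ha0, ha1, ha3⟩
    exact ⟨by simp [ha0], by simp [ha1], fun i hi => by simp [ha3 i hi]⟩

/-- The negative part `m` of `g`, as a type. -/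
abbrev MT (n k : ℕ) := ↥(mSub n k)

/-- The projection `π_m : g → m` along `g⁰`. -/
def Pm (n k : ℕ) (x : Gg n) : Gg n :=
  (![0, 0, 0, x.1 3],
   (fun i => if (n:ℤ) - 3 - (k:ℤ) ≤ (i.val:ℤ) + 1 then x.2.1 i else 0, x.2.2))

lemma Pm_mem (n k : ℕ) (x : Gg n) : Pm n k x ∈ mSub n k := by
  refine ⟨?_, ?_, ?_, fun i hi => ?_⟩
  · simp [Pm]
  · simp [Pm]
  · simp [Pm]
  · show (if (n:ℤ) - 3 - (k:ℤ) ≤ (i.val:ℤ) + 1 then x.2.1 i else 0) = 0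
    rw [if_neg (by omega)]

/-- The projection `π_m : g → m`, viewed as a map into `m`. -/
def ptoM (n k : ℕ) (x : Gg n) : MT n k := ⟨Pm n k x, Pm_mem n k x⟩

/-- The Lie bracket of `m` (the bracket of `g` restricted to `m`; since `m` is closed
under the bracket, composing with the projection `π_m` does not change the value). -/
def mBrM (n k : ℕ) (x y : MT n k) : MT n k := ptoM n k (gBr n x.1 y.1)

/-- `ψ` is an ℝ-linear map `m → g`, i.e. an element of `C¹(m,g)`. -/
def IsLin1 (n k : ℕ) (ψ : MT n k → Gg n) : Prop :=
  (∀ x y, ψ (x + y) = ψ x + ψ y) ∧ ∀ (c : ℝ) (x), ψ (c • x) = c • ψ x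

/-- `ψ` is an alternating ℝ-bilinear map `m × m → g`, i.e. an element of `C²(m,g)`. -/
def IsAlt2 (n k : ℕ) (ψ : MT n k → MT n k → Gg n) : Prop :=
  (∀ y, IsLin1 n k (fun x => ψ x y)) ∧ (∀ x, IsLin1 n k (ψ x)) ∧ ∀ x, ψ x x = 0

/-- The coboundary `∂ : C¹(m,g) → C²(m,g)`,
`(∂φ)(x,y) = [x, φ y] - [y, φ x] + φ [x,y]`. -/
def cobound (n k : ℕ) (φ : MT n k → Gg n) : MT n k → MT n k → Gg n :=
  fun x y => gBr n x.1 (φ y) - gBr n y.1 (φ x) + φ (mBrM n k x y)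

/-- A 1-cochain is homogeneous of weight `w` if `ψ(g_p) ⊆ g_{p+w}` for all `p < 0`. -/
def Homog1 (n k : ℕ) (w : ℤ) (ψ : MT n k → Gg n) : Prop :=
  ∀ p : ℤ, p < 0 → ∀ x : MT n k, (x : Gg n) ∈ gComp n k p → ψ x ∈ gComp n k (p + w)

/-- A 2-cochain is homogeneous of weight `w` if `ψ(g_p × g_q) ⊆ g_{p+q+w}` for `p,q < 0`. -/
def Homog2 (n k : ℕ) (w : ℤ) (ψ : MT n k → MT n k → Gg n) : Prop :=
  ∀ p q : ℤ, p < 0 → q < 0 → ∀ x y : MT n k,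
    (x : Gg n) ∈ gComp n k p → (y : Gg n) ∈ gComp n k q → ψ x y ∈ gComp n k (p + q + w)

/-- `C¹₊(m,g)`: the span of the homogeneous 1-cochains of positive weight. -/
def C1plus (n k : ℕ) : Submodule ℝ (MT n k → Gg n) :=
  Submodule.span ℝ {ψ | IsLin1 n k ψ ∧ ∃ w : ℤ, 0 < w ∧ Homog1 n k w ψ}

/-- `C²₊(m,g)`: the span of the homogeneous alternating 2-cochains of positive weight. -/
def C2plus (n k : ℕ) : Submodule ℝ (MT n k → MT n k → Gg n) :=
  Submodule.span ℝ {ψ | IsAlt2 n k ψ ∧ ∃ w : ℤ, 0 < w ∧ Homog2 n k w ψ}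

/-- The image `∂(C¹₊(m,g)) ⊆ C²(m,g)`. -/
def imDel (n k : ℕ) : Submodule ℝ (MT n k → MT n k → Gg n) :=
  Submodule.span ℝ (cobound n k '' {φ | φ ∈ C1plus n k})

/-- The action of `A ∈ g⁰` on 1-cochains: `(A·ψ)(x) = [A, ψ x] - ψ(π_m [A, x])`. -/
def act1 (n k : ℕ) (A : Gg n) (ψ : MT n k → Gg n) : MT n k → Gg n :=
  fun x => gBr n A (ψ x) - ψ (ptoM n k (gBr n A x.1))

/-- The action of `A ∈ g⁰` on 2-cochains:
`(A·ψ)(x,y) = [A, ψ x y] - ψ(π_m [A, x]) y - ψ x (π_m [A, y])`. -/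
def act2 (n k : ℕ) (A : Gg n) (ψ : MT n k → MT n k → Gg n) : MT n k → MT n k → Gg n :=
  fun x y => gBr n A (ψ x y) - ψ (ptoM n k (gBr n A x.1)) y - ψ x (ptoM n k (gBr n A y.1))

/-- The coefficient of `ε_p` (the dual functional `ε*_p`). -/
def epsCoef (n : ℕ) (p : ℕ) (x : Gg n) : ℝ :=
  if h : 1 ≤ p ∧ p ≤ 2*n-6 then x.2.1 ⟨p-1, by omega⟩ else 0

/-- The 1-cochain `ε*_{n-3-k} ⊗ ε_{2n-6}`. -/
def cA (n k : ℕ) : MT n k → Gg n := fun x => epsCoef n (n-3-k) x.1 • bEps n (2*n-6)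

/-- The 1-cochain `X* ⊗ ε_{n-4-k}`. -/
def cB (n k : ℕ) : MT n k → Gg n := fun x => (x : Gg n).1 3 • bEps n (n-4-k)

/-- The 2-cochain `X* ∧ ε*_{n-1+k} ⊗ η`. -/
def cC (n k : ℕ) : MT n k → MT n k → Gg n := fun x y =>
  ((x : Gg n).1 3 * epsCoef n (n-1+k) y.1 - (y : Gg n).1 3 * epsCoef n (n-1+k) x.1) • bEta n

/-- The 2-cochain `ε*_{n-3-k} ∧ η* ⊗ ε_{2n-6}`. -/
def cD (n k : ℕ) : MT n k → MT n k → Gg n := fun x y =>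
  (epsCoef n (n-3-k) x.1 * (y : Gg n).2.2 - epsCoef n (n-3-k) y.1 * (x : Gg n).2.2) • bEps n (2*n-6)

/-!
Every `ε_p` with `p ≤ n-4-k` lies in `g⁰` and acts on `x ∈ m` by
`[ε_p, x] = -X*(x) ε_{p+1} + (-1)^p ε*_{2n-5-p}(x) η`. On a cochain `(x, y) ↦ f(x, y) C` with
scalar `f`, an element `A ∈ g⁰` acts as `f ⊗ [A, C]` minus the derivative of `f` along
`π_m ∘ ad A`, so everything reduces to how `ad ε_p` moves the functionals `X*`, `η*`, `ε*_q`.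
With `a = n-4-k` and `e = n-1+k` (the partner of `a` in the Heisenberg pairing):
`ε_a · (ε*_{a+1} ∧ η* ⊗ ε_{2n-6}) = X* ∧ η* ⊗ ε_{2n-6} - (-1)^a ε*_{a+1} ∧ ε*_e ⊗ ε_{2n-6}`,
applying `ε_a` again gives `-2(-1)^a X* ∧ ε*_e ⊗ ε_{2n-6}`, and `ε_1` (which kills `X*` and
`ε*_e` on `m`, as `ε_2 ∉ m`) turns the value `ε_{2n-6}` into `-η`. The result
`2(-1)^a X* ∧ ε*_e ⊗ η` is `2 ∂(X* ⊗ ε_a)`; it is nonzero at `(X, ε_e)`, and `X* ⊗ ε_a` has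
weight `1` because `ε_a` has weight `0`.
-/

lemma neg_one_pow_rev_succ {n : ℕ} (i : Fin (2 * n - 6)) :
    (-1 : ℝ) ^ (i.rev.val + 1) = -(-1) ^ (i.val + 1) := by
  have hsum : i.rev.val + 1 + (i.val + 1) = 2 * (n - 3) + 1 := by
    rw [Fin.val_rev]; have := i.isLt; omega
  have hprod : (-1 : ℝ) ^ (i.rev.val + 1) * (-1) ^ (i.val + 1) = -1 := by
    rw [← pow_add, hsum, pow_succ, pow_mul]; norm_num
  rcases neg_one_pow_eq_or ℝ (i.val + 1) with h | h <;> rw [h] at hprod ⊢ <;> linarith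

lemma heisBr_swap {n : ℕ} (x y : Hs n) : heisBr n y x = -heisBr n x y := by
  refine Prod.ext (by simp [heisBr]) ?_
  simp only [heisBr, Prod.snd_neg, ← Finset.sum_neg_distrib]
  refine Fintype.sum_equiv Fin.revPerm _ _ fun i => ?_
  simp only [Fin.revPerm_apply, Fin.rev_rev, neg_one_pow_rev_succ]
  ring

lemma gl2Br_swap (a b : G2) : gl2Br b a = -gl2Br a b := by
  ext i; fin_cases i <;> simp [gl2Br] <;> ring

lemma gBr_swap {n : ℕ} (x y : Gg n) : gBr n y x = -gBr n x y := by
  simp only [gBr, gl2Br_swap x.1, heisBr_swap x.2, Prod.neg_mk]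
  congr 1
  abel

lemma gl2Br_smul_right (a b : G2) (c : ℝ) : gl2Br a (c • b) = c • gl2Br a b := by
  ext i; fin_cases i <;> simp [gl2Br] <;> ring

lemma phi_smul_left {n : ℕ} (a : G2) (v : Hs n) (c : ℝ) :
    phi n (c • a) v = c • phi n a v := by
  ext i <;> simp only [phi, Pi.smul_apply, smul_eq_mul, Prod.smul_fst, Prod.smul_snd] <;>
    (try split_ifs) <;> ring

lemma phi_smul_right {n : ℕ} (a : G2) (v : Hs n) (c : ℝ) :
    phi n a (c • v) = c • phi n a v := by
  ext i <;> simp only [phi, Pi.smul_apply, smul_eq_mul, Prod.smul_fst, Prod.smul_snd] <;>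
    (try split_ifs) <;> ring

lemma heisBr_smul_right {n : ℕ} (x y : Hs n) (c : ℝ) :
    heisBr n x (c • y) = c • heisBr n x y := by
  refine Prod.ext (by simp [heisBr]) ?_
  simp only [heisBr, Prod.smul_snd, Prod.smul_fst, Pi.smul_apply, smul_eq_mul, Finset.mul_sum]
  exact Finset.sum_congr rfl fun i _ => by ring

lemma gBr_smul_right {n : ℕ} (x y : Gg n) (c : ℝ) : gBr n x (c • y) = c • gBr n x y := by
  simp only [gBr, Prod.smul_fst, Prod.smul_snd, gl2Br_smul_right, phi_smul_left,
    phi_smul_right, heisBr_smul_right, Prod.smul_mk, smul_add, smul_sub]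

lemma epsCoef_of_mem_Icc {n p : ℕ} (hp : 1 ≤ p ∧ p ≤ 2 * n - 6) (x : Gg n) :
    epsCoef n p x = x.2.1 ⟨p - 1, by omega⟩ := dif_pos hp

lemma heisBr_epsV_left {n p : ℕ} (hp1 : 1 ≤ p) (hp2 : p ≤ 2 * n - 6) (z : Hs n) :
    heisBr n (epsV n p) z = (0, (-1) ^ p * z.1 ⟨2 * n - 6 - p, by omega⟩) := by
  refine Prod.ext rfl ?_
  rw [heisBr, Finset.sum_eq_single ⟨p - 1, by omega⟩ (fun i _ hi => ?_) (by simp)]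
  · have hrev :
        Fin.rev (⟨p - 1, by omega⟩ : Fin (2 * n - 6)) = ⟨2 * n - 6 - p, by omega⟩ :=
      Fin.ext (by simp only [Fin.val_rev]; omega)
    simp only [epsV, hrev, show p - 1 + 1 = p by omega, if_true, mul_one]
  · have : i.val + 1 ≠ p := fun h => hi (Fin.ext (by simp only; omega))
    simp [epsV, this]

-- For `p = 2n-6` the vector `bEps n (p + 1)` is `0`, matching `φ(X) ε_{2n-6} = 0`.
lemma gBr_bEps {n p e : ℕ} (hp1 : 1 ≤ p) (hp2 : p ≤ 2 * n - 6) (he : p + e = 2 * n - 5)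
    {x : Gg n} (h0 : x.1 0 = 0) (h1 : x.1 1 = 0) (h2 : x.1 2 = 0) :
    gBr n (bEps n p) x = (-x.1 3) • bEps n (p + 1) + ((-1) ^ p * epsCoef n e x) • bEta n := by
  rw [epsCoef_of_mem_Icc ⟨by omega, by omega⟩, gBr, bEps, heisBr_epsV_left hp1 hp2]
  ext j
  · fin_cases j <;> simp [gl2Br, bEps, bEta]
  · simp [phi, h0, h1, h2, epsV, bEps, bEta, etaV]
    split_ifs <;> first | rfl | omega
  · simp [phi, h2, epsV, bEps, bEta, etaV, show e - 1 = 2 * n - 6 - p by omega]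

lemma epsCoef_Pm {n k : ℕ} (q : ℕ) (v : Gg n) :
    epsCoef n q (Pm n k v) = if (n : ℤ) - 3 - k ≤ q then epsCoef n q v else 0 := by
  simp only [epsCoef, Pm]
  split_ifs <;> first | rfl | omega

lemma X_ptoM_gBr_bEps {n k : ℕ} (p : ℕ) (x : MT n k) :
    (ptoM n k (gBr n (bEps n p) x.1)).1.1 3 = 0 := by
  simp [ptoM, Pm, gBr, gl2Br, bEps]

lemma eta_ptoM_gBr_bEps {n k p e : ℕ} (hp1 : 1 ≤ p) (hp2 : p ≤ 2 * n - 6)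
    (he : p + e = 2 * n - 5) (x : MT n k) :
    (ptoM n k (gBr n (bEps n p) x.1)).1.2.2 = (-1) ^ p * epsCoef n e x.1 := by
  change (gBr n (bEps n p) x.1).2.2 = _
  rw [gBr_bEps hp1 hp2 he x.2.1 x.2.2.1 x.2.2.2.1]
  simp [bEps, bEta, epsV, etaV]

lemma epsCoef_ptoM_gBr_bEps_succ {n k p q : ℕ} (hp : 1 ≤ p) (hq : p + 1 = q)
    (hqn : q ≤ 2 * n - 6) (hqk : n - 3 - k ≤ q) (x : MT n k) :
    epsCoef n q (ptoM n k (gBr n (bEps n p) x.1)).1 = -x.1.1 3 := by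
  subst hq
  rw [ptoM, epsCoef_Pm, if_pos (by omega),
    gBr_bEps hp (by omega) (Nat.add_sub_of_le (by omega)) x.2.1 x.2.2.1 x.2.2.2.1,
    epsCoef_of_mem_Icc ⟨by omega, hqn⟩]
  simp [bEps, bEta, epsV, etaV]

lemma epsCoef_ptoM_gBr_bEps_of_ne {n k p q : ℕ} (hp1 : 1 ≤ p) (hp2 : p ≤ 2 * n - 6)
    (hq : q ≠ p + 1) (x : MT n k) :
    epsCoef n q (ptoM n k (gBr n (bEps n p) x.1)).1 = 0 := by
  rw [ptoM, epsCoef_Pm,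
    gBr_bEps hp1 hp2 (Nat.add_sub_of_le (by omega)) x.2.1 x.2.2.1 x.2.2.2.1]
  unfold epsCoef
  split_ifs <;> simp [bEps, bEta, epsV, etaV] <;> omega

lemma gBr_bEps_bEps_top {n p : ℕ} (hp1 : 2 ≤ p) (hp2 : p ≤ 2 * n - 6) :
    gBr n (bEps n p) (bEps n (2 * n - 6)) = 0 := by
  rw [gBr_bEps (by omega) hp2 (Nat.add_sub_of_le (by omega)) rfl rfl rfl]
  simp [bEps, epsCoef, epsV, show 2 * n - 5 - p - 1 + 1 ≠ 2 * n - 6 by omega]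

lemma gBr_bEps_one_bEps_top {n : ℕ} (hn : 4 ≤ n) :
    gBr n (bEps n 1) (bEps n (2 * n - 6)) = -bEta n := by
  rw [gBr_bEps le_rfl (by omega) (show 1 + (2 * n - 6) = 2 * n - 5 by omega) rfl rfl rfl]
  simp only [bEps, epsCoef, epsV]
  rw [dif_pos (by omega), if_pos (by omega)]
  simp

lemma act2_smul_const {n k : ℕ} (A C : Gg n) (f : MT n k → MT n k → ℝ) :
    act2 n k A (fun x y => f x y • C) = fun x y =>
      f x y • gBr n A C -
        (f (ptoM n k (gBr n A x.1)) y + f x (ptoM n k (gBr n A y.1))) • C := by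
  funext x y
  simp only [act2, gBr_smul_right, add_smul]
  abel

-- The paper's cochain `α ∧ β ⊗ C` is `fun x y => wedgeCoef α β x y • C`.
def wedgeCoef {n k : ℕ} (α β : Gg n → ℝ) (x y : MT n k) : ℝ :=
  α x.1 * β y.1 - α y.1 * β x.1

def cD1 (n k : ℕ) : MT n k → MT n k → Gg n := fun x y =>
  (wedgeCoef (fun v => v.1 3) (fun v => v.2.2) x y
    - (-1) ^ (n - 4 - k) * wedgeCoef (epsCoef n (n - 3 - k)) (epsCoef n (n - 1 + k)) x y) •
    bEps n (2 * n - 6)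

def cD2 (n k : ℕ) : MT n k → MT n k → Gg n := fun x y =>
  (-2 * (-1) ^ (n - 4 - k) * wedgeCoef (fun v => v.1 3) (epsCoef n (n - 1 + k)) x y) •
    bEps n (2 * n - 6)

lemma act2_bEps_cD {n k : ℕ} (hkn : k + 6 ≤ n) :
    act2 n k (bEps n (n - 4 - k)) (cD n k) = cD1 n k := by
  have h1 : 1 ≤ n - 4 - k := by omega
  have h2 : n - 4 - k ≤ 2 * n - 6 := by omega
  unfold cD
  rw [act2_smul_const, gBr_bEps_bEps_top (by omega) h2]
  funext x y
  simp only [cD1, wedgeCoef, smul_zero, zero_sub,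
    epsCoef_ptoM_gBr_bEps_succ h1 (show n - 4 - k + 1 = n - 3 - k by omega) (by omega) le_rfl,
    eta_ptoM_gBr_bEps h1 h2 (show n - 4 - k + (n - 1 + k) = 2 * n - 5 by omega)]
  module

lemma act2_bEps_cD1 {n k : ℕ} (hkn : k + 6 ≤ n) :
    act2 n k (bEps n (n - 4 - k)) (cD1 n k) = cD2 n k := by
  have h1 : 1 ≤ n - 4 - k := by omega
  have h2 : n - 4 - k ≤ 2 * n - 6 := by omega
  unfold cD1
  rw [act2_smul_const, gBr_bEps_bEps_top (by omega) h2]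
  funext x y
  simp only [cD2, wedgeCoef, smul_zero, zero_sub, X_ptoM_gBr_bEps,
    epsCoef_ptoM_gBr_bEps_succ h1 (show n - 4 - k + 1 = n - 3 - k by omega) (by omega) le_rfl,
    epsCoef_ptoM_gBr_bEps_of_ne h1 h2 (show n - 1 + k ≠ n - 4 - k + 1 by omega),
    eta_ptoM_gBr_bEps h1 h2 (show n - 4 - k + (n - 1 + k) = 2 * n - 5 by omega)]
  module

lemma X_mBrM {n k : ℕ} (x y : MT n k) : (mBrM n k x y).1.1 3 = 0 := by
  have hx : x.1.1 1 = 0 := x.2.2.1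
  have hy : y.1.1 1 = 0 := y.2.2.1
  simp [mBrM, ptoM, Pm, gBr, gl2Br, hx, hy]

lemma cobound_cB {n k : ℕ} (hkn : k + 5 ≤ n) :
    cobound n k (cB n k) = fun x y =>
      ((-1) ^ (n - 4 - k) * wedgeCoef (fun v => v.1 3) (epsCoef n (n - 1 + k)) x y) • bEta n := by
  funext x y
  have hB (z : MT n k) := gBr_bEps (p := n - 4 - k) (e := n - 1 + k) (by omega) (by omega)
    (by omega) z.2.1 z.2.2.1 z.2.2.2.1
  simp only [cobound, cB, X_mBrM, zero_smul, add_zero, gBr_smul_right,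
    gBr_swap (bEps n (n - 4 - k)), hB, wedgeCoef]
  module

lemma act2_bEps_one_cD2 {n k : ℕ} (hkn : k + 5 ≤ n) :
    act2 n k (bEps n 1) (cD2 n k) = (2 : ℝ) • cobound n k (cB n k) := by
  unfold cD2
  rw [act2_smul_const, gBr_bEps_one_bEps_top (by omega), cobound_cB hkn]
  funext x y
  simp only [wedgeCoef, X_ptoM_gBr_bEps, Pi.smul_apply,
    epsCoef_ptoM_gBr_bEps_of_ne (n := n) (k := k) le_rfl (by omega)
      (show n - 1 + k ≠ 1 + 1 by omega)]
  module

lemma cobound_cB_ne_zero {n k : ℕ} (hkn : k + 5 ≤ n) : cobound n k (cB n k) ≠ 0 := by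
  rw [cobound_cB hkn]
  intro h
  have hX : bX n ∈ mSub n k := ⟨rfl, rfl, rfl, fun _ _ => rfl⟩
  have hE : bEps n (n - 1 + k) ∈ mSub n k :=
    ⟨rfl, rfl, rfl, fun i hi => if_neg (by omega)⟩
  have := congrArg (fun c => c.2.2) (congrFun (congrFun h ⟨_, hX⟩) ⟨_, hE⟩)
  simp [wedgeCoef, bX, bEta, etaV, bEps, epsV, show n - 1 + k - 1 + 1 = n - 1 + k by omega,
    epsCoef_of_mem_Icc (show 1 ≤ n - 1 + k ∧ n - 1 + k ≤ 2 * n - 6 by omega)] at this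

lemma cB_homog {n k : ℕ} (hkn : k + 5 ≤ n) : Homog1 n k 1 (cB n k) := by
  intro p _ x hx
  let L : Gg n →ₗ[ℝ] Gg n :=
    ((LinearMap.proj 3).comp (LinearMap.fst ℝ G2 (Hs n))).smulRight (bEps n (n - 4 - k))
  have hL (v : Gg n) (hv : v.1 3 = 0) : L v ∈ gComp n k (p + 1) := by
    simp [L, hv]
  suffices gComp n k p ≤ (gComp n k (p + 1)).comap L from this hx
  rw [gComp, Submodule.span_le]
  rintro v (⟨rfl, -⟩ | ⟨hv | hv, -⟩ | ⟨rfl, rfl⟩ | ⟨q, -, -, rfl, -⟩ | ⟨rfl, -⟩)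
  · exact hL _ rfl
  · exact hL _ (by rw [hv]; rfl)
  · exact hL _ (by rw [hv]; rfl)
  · refine Submodule.subset_span (Or.inr (Or.inr (Or.inr (Or.inl
      ⟨n - 4 - k, by omega, by omega, by simp [L, bX], by omega⟩))))
  · exact hL _ rfl
  · exact hL _ rfl

lemma cB_mem_C1plus {n k : ℕ} (hkn : k + 5 ≤ n) : cB n k ∈ C1plus n k := by
  refine Submodule.subset_span ⟨⟨fun x y => ?_, fun c x => ?_⟩, 1, one_pos, cB_homog hkn⟩ <;>
    simp [cB, add_smul, mul_smul]

lemma bEps_mem_g0Sub {n k p : ℕ} (hp : p ≤ n - 4 - k) : bEps n p ∈ g0Sub n k :=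
  ⟨rfl, rfl, fun i hi => if_neg (by omega)⟩

/-- for `0 ≤ k ≤ n-6`, there is a nonzero real `c` with
`ε_1 · (ε_{n-4-k} · (ε_{n-4-k} · (ε*_{n-3-k} ∧ η* ⊗ ε_{2n-6}))) = c · ∂(X* ⊗ ε_{n-4-k})`
(where `·` denotes the `g⁰`-action on 2-cochains); in particular, every `g⁰`-invariant
subspace of `C²(m,g)` containing `ε*_{n-3-k} ∧ η* ⊗ ε_{2n-6}` contains a nonzero element
of `∂(C¹₊(m,g))`. -/
theorem action_sends_cD_into_image_of_cobound (n k : ℕ) (hn : 6 ≤ n) (hk : k ≤ n - 6) :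
    (∃ c : ℝ, c ≠ 0 ∧
      act2 n k (bEps n 1)
        (act2 n k (bEps n (n-4-k)) (act2 n k (bEps n (n-4-k)) (cD n k))) =
      c • cobound n k (cB n k)) ∧
    (∀ N : Submodule ℝ (MT n k → MT n k → Gg n),
      (∀ A ∈ g0Sub n k, ∀ ψ ∈ N, act2 n k A ψ ∈ N) → cD n k ∈ N →
      ∃ ψ, ψ ∈ N ∧ ψ ∈ imDel n k ∧ ψ ≠ 0) := by
  have hkn : k + 6 ≤ n := by omega
  have hchain : act2 n k (bEps n 1)
      (act2 n k (bEps n (n-4-k)) (act2 n k (bEps n (n-4-k)) (cD n k))) =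
      (2 : ℝ) • cobound n k (cB n k) := by
    rw [act2_bEps_cD hkn, act2_bEps_cD1 hkn, act2_bEps_one_cD2 (by omega)]
  refine ⟨⟨2, two_ne_zero, hchain⟩, fun N hN hcD => ?_⟩
  have ha : bEps n (n - 4 - k) ∈ g0Sub n k := bEps_mem_g0Sub le_rfl
  have h1 : bEps n 1 ∈ g0Sub n k := bEps_mem_g0Sub (by omega)
  refine ⟨_, hN _ h1 _ (hN _ ha _ (hN _ ha _ hcD)), ?_, ?_⟩ <;> rw [hchain]
  · exact Submodule.smul_mem _ _ (Submodule.subset_span ⟨_, cB_mem_C1plus (by omega), rfl⟩)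
  · exact smul_ne_zero two_ne_zero (cobound_cB_ne_zero (by omega))
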